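/- Let E be an equivalence relation on a standard Borel space X belonging to a class 𝓘 (idealistic analytic equivalence relations with all classes Borel, not classwise Borel isomorphic to an orbit equivalence relation), such that E₀ is not Borel reducible to E. Let F₁ and F₂ be Borel orbit equivalence relations with uncountably many classes. Then F₁ ≤_B F₂ if and only if E ⊕ F₁ ≤_B E ⊕ F₂. (Assume Silver's dichotomy, the Borel Glimm–Effros dichotomy, and the absorption property: for any orbit equivalence relation F with id_ℝ ≤_B F, F ∼_B id_ℝ ⊕ F.) -/

import Mathlib

/-- `F` is idealistic (with a Borel assignment of nontrivial ccc σ-ideals to classes). -/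
def Idealistic {Z : Type*} [MeasurableSpace Z] (F : Z → Z → Prop) : Prop :=
  ∃ I : Z → Set (Set Z),
    (∀ z w, F z w → I z = I w) ∧
    (∀ z, ∀ D ∈ I z, D ⊆ {y | F z y}) ∧
    (∀ z, (∅ : Set Z) ∈ I z) ∧
    (∀ z, ∀ D D' : Set Z, D' ∈ I z → D ⊆ D' → D ∈ I z) ∧
    (∀ z, ∀ D : ℕ → Set Z, (∀ n, D n ∈ I z) → (⋃ n, D n) ∈ I z) ∧
    (∀ z, {y | F z y} ∉ I z) ∧
    (∀ z, ∀ 𝒟 : Set (Set Z), (∀ D ∈ 𝒟, D ⊆ {y | F z y} ∧ D ∉ I z) →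
      𝒟.PairwiseDisjoint id → 𝒟.Countable) ∧
    (∀ A : Set (Z × Z), MeasurableSet A →
      MeasurableSet {z | {y | F z y ∧ (z, y) ∈ A} ∈ I z})

/-- `E` is Borel reducible to `F`. -/
def BorelRed {X Y : Type*} [MeasurableSpace X] [MeasurableSpace Y]
    (E : X → X → Prop) (F : Y → Y → Prop) : Prop :=
  ∃ f : X → Y, Measurable f ∧ ∀ x x', E x x' ↔ F (f x) (f x')

/-- `E` is classwise Borel isomorphic to `F`. -/
def ClasswiseBorelIso {X Y : Type*} [MeasurableSpace X] [MeasurableSpace Y]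
    (E : X → X → Prop) (F : Y → Y → Prop) : Prop :=
  ∃ (f : X → Y) (g : Y → X),
    (Measurable f ∧ ∀ x x', E x x' ↔ F (f x) (f x')) ∧
    (Measurable g ∧ ∀ y y', F y y' ↔ E (g y) (g y')) ∧
    (∀ x, E (g (f x)) x) ∧ (∀ y, F (f (g y)) y)

/-- The disjoint union `E ⊕ F` of two equivalence relations. -/
def sumRel {X Y : Type*} (E : X → X → Prop) (F : Y → Y → Prop) :
    X ⊕ Y → X ⊕ Y → Prop
  | Sum.inl a, Sum.inl b => E a b
  | Sum.inr a, Sum.inr b => F a b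
  | _, _ => False

/-- `E₀`: eventual equality on `2^ω`. -/
def E0 (x y : ℕ → Bool) : Prop := ∃ n : ℕ, ∀ m ≥ n, x m = y m

/-- `R` has uncountably many classes. -/
def UncountablyManyClasses {W : Type*} (R : W → W → Prop) : Prop :=
  ¬ ∃ D : Set W, D.Countable ∧ ∀ w, ∃ d ∈ D, R w d


section Helpers

theorem borelRed_trans' {X Y Z : Type*} [MeasurableSpace X] [MeasurableSpace Y] [MeasurableSpace Z]
    {E : X → X → Prop} {F : Y → Y → Prop} {G : Z → Z → Prop}
    (h1 : BorelRed E F) (h2 : BorelRed F G) : BorelRed E G := by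
  obtain ⟨f, hf, hf'⟩ := h1
  obtain ⟨g, hg, hg'⟩ := h2
  exact ⟨g ∘ f, hg.comp hf, fun x x' => (hf' x x').trans (hg' _ _)⟩

theorem orbitEquivalence' {G W : Type*} [Group G] (a : G → W → W)
    (hone : ∀ w, a 1 w = w) (hmul : ∀ g h w, a g (a h w) = a (g * h) w)
    (F : W → W → Prop) (hF : ∀ w w', F w w' ↔ ∃ g, a g w = w') : Equivalence F := by
  constructor
  · intro w; exact (hF w w).2 ⟨1, hone w⟩
  · intro w w' h
    obtain ⟨g, hg⟩ := (hF w w').1 h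
    exact (hF w' w).2 ⟨g⁻¹, by rw [← hg, hmul, inv_mul_cancel, hone]⟩
  · intro x y z h1 h2
    obtain ⟨g, hg⟩ := (hF x y).1 h1
    obtain ⟨g', hg'⟩ := (hF y z).1 h2
    exact (hF x z).2 ⟨g' * g, by rw [← hmul, hg, hg']⟩

/-- Auxiliary map `2^ω → 2^ω`: spread `x` on even coordinates, flip `z` on odd ones. -/
def tmap' (z x : ℕ → Bool) : ℕ → Bool :=
  fun n => if n % 2 = 0 then x (n / 2) else !(z n)

theorem tmap'_measurable (z : ℕ → Bool) : Measurable (tmap' z) := by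
  apply measurable_pi_lambda
  intro n
  unfold tmap'
  split_ifs
  · exact measurable_pi_apply _
  · exact measurable_const

theorem tmap'_e0_iff (z x y : ℕ → Bool) : E0 x y ↔ E0 (tmap' z x) (tmap' z y) := by
  constructor
  · rintro ⟨n, h⟩
    refine ⟨2 * n, fun m hm => ?_⟩
    unfold tmap'
    split_ifs with hpar
    · exact h (m / 2) (by omega)
    · rfl
  · rintro ⟨n, h⟩
    refine ⟨n, fun m hm => ?_⟩
    have h2 := h (2 * m) (by omega)
    unfold tmap' at h2
    have hmod : 2 * m % 2 = 0 := by omega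
    have hdiv : 2 * m / 2 = m := by omega
    rw [if_pos hmod, if_pos hmod, hdiv] at h2
    exact h2

theorem tmap'_not_e0 (z x : ℕ → Bool) : ¬ E0 (tmap' z x) z := by
  rintro ⟨n, h⟩
  have h2 := h (2 * n + 1) (by omega)
  unfold tmap' at h2
  rw [if_neg (by omega)] at h2
  exact (Bool.not_ne_self _) h2

end Helpers

/-- Let `E ∈ 𝓘` (idealistic, analytic, all classes Borel, not classwise Borel isomorphic
to any orbit equivalence relation) with `E₀ ≰_B E`, and let `F₁`, `F₂` be Borel orbit
equivalence relations with uncountably many classes. Then `F₁ ≤_B F₂` iff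
`E ⊕ F₁ ≤_B E ⊕ F₂`. (Silver's dichotomy, the Borel Glimm–Effros dichotomy and the
absorption property for orbit equivalence relations are assumed as hypotheses.) -/
theorem sum_with_I_member_preserves_reducibility
    {X : Type} [TopologicalSpace X] [PolishSpace X] [MeasurableSpace X] [BorelSpace X]
    (E : X → X → Prop) (hEeq : Equivalence E)
    (hEan : MeasureTheory.AnalyticSet {p : X × X | E p.1 p.2})
    (hEid : Idealistic E)
    (hEcls : ∀ x, MeasurableSet {y | E x y})
    -- `E` is not classwise Borel isomorphic to any orbit equivalence relation
    (hEnotorb : ∀ (G W : Type) [Group G] [TopologicalSpace G] [IsTopologicalGroup G]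
      [PolishSpace G] [MeasurableSpace G] [BorelSpace G]
      [MeasurableSpace W] [StandardBorelSpace W] (a : G → W → W),
        (Measurable fun p : G × W => a p.1 p.2) → (∀ w, a 1 w = w) →
        (∀ g h w, a g (a h w) = a (g * h) w) →
        ¬ ClasswiseBorelIso E (fun w w' : W => ∃ g : G, a g w = w'))
    (hE0 : ¬ BorelRed E0 E)
    -- `F₁`, `F₂`: Borel orbit equivalence relations with uncountably many classes
    {G₁ Y₁ G₂ Y₂ : Type}
    [Group G₁] [TopologicalSpace G₁] [IsTopologicalGroup G₁] [PolishSpace G₁]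
    [MeasurableSpace G₁] [BorelSpace G₁] [MeasurableSpace Y₁] [StandardBorelSpace Y₁]
    [Group G₂] [TopologicalSpace G₂] [IsTopologicalGroup G₂] [PolishSpace G₂]
    [MeasurableSpace G₂] [BorelSpace G₂] [MeasurableSpace Y₂] [StandardBorelSpace Y₂]
    (a₁ : G₁ → Y₁ → Y₁) (ha₁ : Measurable fun p : G₁ × Y₁ => a₁ p.1 p.2)
    (h₁one : ∀ y, a₁ 1 y = y) (h₁mul : ∀ g h y, a₁ g (a₁ h y) = a₁ (g * h) y)
    (a₂ : G₂ → Y₂ → Y₂) (ha₂ : Measurable fun p : G₂ × Y₂ => a₂ p.1 p.2)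
    (h₂one : ∀ y, a₂ 1 y = y) (h₂mul : ∀ g h y, a₂ g (a₂ h y) = a₂ (g * h) y)
    (F₁ : Y₁ → Y₁ → Prop) (hF₁orb : ∀ y y', F₁ y y' ↔ ∃ g, a₁ g y = y')
    (hF₁borel : MeasurableSet {p : Y₁ × Y₁ | F₁ p.1 p.2})
    (hF₁unc : UncountablyManyClasses F₁)
    (F₂ : Y₂ → Y₂ → Prop) (hF₂orb : ∀ y y', F₂ y y' ↔ ∃ g, a₂ g y = y')
    (hF₂borel : MeasurableSet {p : Y₂ × Y₂ | F₂ p.1 p.2})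
    (hF₂unc : UncountablyManyClasses F₂)
    -- Silver's dichotomy
    (hSilver : ∀ (W : Type) [MeasurableSpace W] [StandardBorelSpace W]
      (R : W → W → Prop), Equivalence R → MeasurableSet {p : W × W | R p.1 p.2} →
        UncountablyManyClasses R → BorelRed (fun a b : ℝ => a = b) R)
    -- Borel Glimm–Effros dichotomy
    (hGE : ∀ (W : Type) [MeasurableSpace W] [StandardBorelSpace W]
      (R : W → W → Prop), Equivalence R → MeasurableSet {p : W × W | R p.1 p.2} →
        (BorelRed R (fun a b : ℝ => a = b) ∨ BorelRed E0 R))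
    -- absorption: an orbit equivalence relation above `id_ℝ` absorbs `id_ℝ`
    (hAbs : ∀ (G W : Type) [Group G] [TopologicalSpace G] [IsTopologicalGroup G]
      [PolishSpace G] [MeasurableSpace G] [BorelSpace G]
      [MeasurableSpace W] [StandardBorelSpace W] (a : G → W → W),
        (Measurable fun p : G × W => a p.1 p.2) → (∀ w, a 1 w = w) →
        (∀ g h w, a g (a h w) = a (g * h) w) →
        ∀ F : W → W → Prop, (∀ w w', F w w' ↔ ∃ g, a g w = w') →
          BorelRed (fun a b : ℝ => a = b) F →
          (BorelRed F (sumRel (fun a b : ℝ => a = b) F) ∧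
            BorelRed (sumRel (fun a b : ℝ => a = b) F) F)) :
    BorelRed F₁ F₂ ↔ BorelRed (sumRel E F₁) (sumRel E F₂) := by
  classical
  have hF₁eq : Equivalence F₁ := orbitEquivalence' a₁ h₁one h₁mul F₁ hF₁orb
  have hF₂eq : Equivalence F₂ := orbitEquivalence' a₂ h₂one h₂mul F₂ hF₂orb
  constructor
  · rintro ⟨f, hf, hred⟩
    refine ⟨Sum.elim Sum.inl (Sum.inr ∘ f),
      measurable_inl.sumElim (measurable_inr.comp hf), ?_⟩
    rintro (x | y) (x' | y') <;> simp [sumRel] <;> exact hred _ _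
  · rintro ⟨g, hg, hgr⟩
    have hY₂ : Nonempty Y₂ := by
      by_contra hne
      exact hF₂unc ⟨∅, Set.countable_empty, fun w => (hne ⟨w⟩).elim⟩
    have hid₂ : BorelRed (fun a b : ℝ => a = b) F₂ := hSilver Y₂ F₂ hF₂eq hF₂borel hF₂unc
    obtain ⟨-, habs⟩ := hAbs G₂ Y₂ a₂ ha₂ h₂one h₂mul F₂ hF₂orb hid₂
    set A : Set Y₁ := (fun y => g (Sum.inr y)) ⁻¹' (Set.range Sum.inl) with hAdef
    have hAm : MeasurableSet A := (hg.comp measurable_inr) measurableSet_range_inl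
    have hkey : ∀ y y', F₁ y y' ↔ sumRel E F₂ (g (Sum.inr y)) (g (Sum.inr y')) :=
      fun y y' => hgr (Sum.inr y) (Sum.inr y')
    set g₂ : Y₁ → Y₂ := fun y => Sum.elim (fun _ => Classical.arbitrary Y₂) id (g (Sum.inr y))
      with hg₂def
    have hg₂m : Measurable g₂ :=
      (measurable_const.sumElim measurable_id).comp (hg.comp measurable_inr)
    have hgnA : ∀ y, y ∉ A → g (Sum.inr y) = Sum.inr (g₂ y) := by
      intro y hy
      rcases hc : g (Sum.inr y) with x | z
      · exact absurd ⟨x, hc.symm⟩ hy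
      · simp [hg₂def, hc]
    have hgAval : ∀ y, y ∈ A → ∃ x : X, g (Sum.inr y) = Sum.inl x := by
      intro y hy
      obtain ⟨x, hx⟩ := hy
      exact ⟨x, hx.symm⟩
    have hinv : ∀ y y', F₁ y y' → y ∈ A → y' ∈ A := by
      intro y y' h hy
      by_contra hy'
      obtain ⟨x, hx⟩ := hgAval y hy
      have h2 := (hkey y y').1 h
      rw [hx, hgnA y' hy'] at h2
      exact h2
    set R : Y₁ → Y₁ → Prop :=
      fun y y' => (y ∈ A ∧ y' ∈ A ∧ F₁ y y') ∨ (y ∉ A ∧ y' ∉ A) with hRdef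
    have hRA : ∀ y y', y ∈ A → y' ∈ A → (R y y' ↔ F₁ y y') := by
      intro y y' hy hy'
      constructor
      · rintro (⟨-, -, h⟩ | ⟨h, -⟩)
        · exact h
        · exact absurd hy h
      · intro h; exact Or.inl ⟨hy, hy', h⟩
    have hReq : Equivalence R := by
      constructor
      · intro y
        by_cases hy : y ∈ A
        · exact Or.inl ⟨hy, hy, hF₁eq.refl y⟩
        · exact Or.inr ⟨hy, hy⟩
      · rintro y y' (⟨hy, hy', h⟩ | ⟨hy, hy'⟩)
        · exact Or.inl ⟨hy', hy, hF₁eq.symm h⟩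
        · exact Or.inr ⟨hy', hy⟩
      · rintro x y z (⟨hx, hy, h⟩ | ⟨hx, hy⟩) (⟨hy2, hz, h2⟩ | ⟨hy2, hz⟩)
        · exact Or.inl ⟨hx, hz, hF₁eq.trans h h2⟩
        · exact absurd hy hy2
        · exact absurd hy2 hy
        · exact Or.inr ⟨hx, hz⟩
    have hRm : MeasurableSet {p : Y₁ × Y₁ | R p.1 p.2} := by
      have h1 : MeasurableSet {p : Y₁ × Y₁ | p.1 ∈ A} := measurable_fst hAm
      have h2 : MeasurableSet {p : Y₁ × Y₁ | p.2 ∈ A} := measurable_snd hAm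
      have : {p : Y₁ × Y₁ | R p.1 p.2} =
          ({p : Y₁ × Y₁ | p.1 ∈ A} ∩ {p | p.2 ∈ A} ∩ {p | F₁ p.1 p.2}) ∪
            ({p : Y₁ × Y₁ | p.1 ∈ A}ᶜ ∩ {p | p.2 ∈ A}ᶜ) := by
        ext p
        simp only [hRdef, Set.mem_setOf_eq, Set.mem_union, Set.mem_inter_iff, Set.mem_compl_iff]
        tauto
      rw [this]
      exact ((h1.inter h2).inter hF₁borel).union (h1.compl.inter h2.compl)
    rcases hGE Y₁ R hReq hRm with hle | hge
    · -- R ≤ id_ℝ : build the reduction F₁ ≤ id_ℝ ⊕ F₂ and absorb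
      obtain ⟨r, hr, hrr⟩ := hle
      refine borelRed_trans' (F := sumRel (fun a b : ℝ => a = b) F₂) ?_ habs
      refine ⟨fun y => if y ∈ A then Sum.inl (r y) else Sum.inr (g₂ y),
        Measurable.ite hAm (measurable_inl.comp hr) (measurable_inr.comp hg₂m), ?_⟩
      intro y y'
      by_cases hy : y ∈ A <;> by_cases hy' : y' ∈ A
      · simp only [if_pos hy, if_pos hy']
        have : F₁ y y' ↔ r y = r y' := by
          rw [← hRA y y' hy hy']; exact hrr y y'
        simpa [sumRel] using this
      · simp only [if_pos hy, if_neg hy']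
        constructor
        · intro h; exact hy' (hinv y y' h hy)
        · intro h; exact h.elim
      · simp only [if_neg hy, if_pos hy']
        constructor
        · intro h; exact hy (hinv y' y (hF₁eq.symm h) hy')
        · intro h; exact h.elim
      · simp only [if_neg hy, if_neg hy']
        have : F₁ y y' ↔ F₂ (g₂ y) (g₂ y') := by
          rw [hkey y y', hgnA y hy, hgnA y' hy']
          exact Iff.rfl
        simpa [sumRel] using this
    · -- E₀ ≤ R : derive a contradiction with E₀ ≰ E
      exfalso
      apply hE0
      obtain ⟨h, hh, hhr⟩ := hge
      by_cases hc : ∀ x, h x ∈ A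
      · obtain ⟨x₁, -⟩ := hgAval _ (hc (fun _ => false))
        set eX : Y₁ → X := fun y => Sum.elim id (fun _ => x₁) (g (Sum.inr y)) with heXdef
        have heXm : Measurable eX :=
          (measurable_id.sumElim measurable_const).comp (hg.comp measurable_inr)
        have hEred : ∀ y y', y ∈ A → y' ∈ A → (F₁ y y' ↔ E (eX y) (eX y')) := by
          intro y y' hy hy'
          obtain ⟨x, hx⟩ := hgAval y hy
          obtain ⟨x', hx'⟩ := hgAval y' hy'
          rw [hkey y y', hx, hx']
          simp [heXdef, hx, hx', sumRel]
        refine ⟨eX ∘ h, heXm.comp hh, fun x x' => ?_⟩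
        rw [hhr x x', hRA _ _ (hc x) (hc x'), hEred _ _ (hc x) (hc x')]
        rfl
      · push_neg at hc
        obtain ⟨x₀, hx₀⟩ := hc
        have hall : ∀ x, h (tmap' x₀ x) ∈ A := by
          intro x
          by_contra hn
          exact tmap'_not_e0 x₀ x ((hhr _ _).2 (Or.inr ⟨hn, hx₀⟩))
        obtain ⟨x₁, -⟩ := hgAval _ (hall (fun _ => false))
        set eX : Y₁ → X := fun y => Sum.elim id (fun _ => x₁) (g (Sum.inr y)) with heXdef
        have heXm : Measurable eX :=
          (measurable_id.sumElim measurable_const).comp (hg.comp measurable_inr)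
        have hEred : ∀ y y', y ∈ A → y' ∈ A → (F₁ y y' ↔ E (eX y) (eX y')) := by
          intro y y' hy hy'
          obtain ⟨x, hx⟩ := hgAval y hy
          obtain ⟨x', hx'⟩ := hgAval y' hy'
          rw [hkey y y', hx, hx']
          simp [heXdef, hx, hx', sumRel]
        refine ⟨eX ∘ h ∘ tmap' x₀, heXm.comp (hh.comp (tmap'_measurable x₀)), fun x x' => ?_⟩
        rw [tmap'_e0_iff x₀ x x', hhr _ _, hRA _ _ (hall x) (hall x'),
          hEred _ _ (hall x) (hall x')]
        rfl
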